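/- arXiv:0906.4706 — 10 statements merged into one kernel-verified Lean document; each statement's English description precedes it below -/
import Mathlib

section
/- For a finite set S of size n, a function φ: 2^S → ℝ, and 0 ≤ r < n, define V(R) = {s ∈ S\R : φ(R ∪ {s}) ≠ φ(R)} and X(R) = {s ∈ R : φ(R\{s}) ≠ φ(R)}. Let v_r (resp. x_r) be the expected size of V(R) (resp. X(R)) over a uniformly random r-element subset R of S. Then v_r/(n-r) = x_{r+1}/(r+1). -/
open Finset

/-! Both sums count the pairs `(R, s)` with `s ∉ R`, `#R = r` and `φ (insert s R) ≠ φ R`: on the left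
`s` is a violator of `R`, on the right `s` is an extreme element of `Q = insert s R`, and
`(R, s) ↦ (insert s R, s)` is a bijection between the two kinds of pairs with inverse
`(Q, s) ↦ (Q.erase s, s)`. Dividing by the numbers of samples, the identity
`C(n, r + 1) * (r + 1) = C(n, r) * (n - r)` turns this equality of sums into the claim. -/

theorem sum_card_violators_eq_sum_card_extreme {α β : Type*} [DecidableEq α] [DecidableEq β]
    (S : Finset α) (φ : Finset α → β) (r : ℕ) :
    ∑ R ∈ S.powersetCard r, #(S.filter fun s => s ∉ R ∧ φ (insert s R) ≠ φ R)
      = ∑ Q ∈ S.powersetCard (r + 1), #(Q.filter fun s => φ (Q.erase s) ≠ φ Q) := by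
  rw [← card_sigma, ← card_sigma]
  refine card_bij' (fun p _ => ⟨insert p.2 p.1, p.2⟩) (fun p _ => ⟨p.1.erase p.2, p.2⟩)
    ?_ ?_ ?_ ?_
  · rintro ⟨R, s⟩ hp
    simp only [mem_sigma, mem_powersetCard, mem_filter] at hp ⊢
    obtain ⟨⟨hRS, hcard⟩, hsS, hsR, hne⟩ := hp
    rw [erase_insert hsR]
    exact ⟨⟨insert_subset hsS hRS, by rw [card_insert_of_notMem hsR, hcard]⟩,
      mem_insert_self s R, hne.symm⟩
  · rintro ⟨Q, s⟩ hp
    simp only [mem_sigma, mem_powersetCard, mem_filter] at hp ⊢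
    obtain ⟨⟨hQS, hcard⟩, hsQ, hne⟩ := hp
    rw [insert_erase hsQ]
    exact ⟨⟨(erase_subset s Q).trans hQS, by rw [card_erase_of_mem hsQ, hcard]; rfl⟩,
      hQS hsQ, notMem_erase s Q, hne.symm⟩
  · rintro ⟨R, s⟩ hp
    simp only [mem_sigma, mem_filter] at hp
    simp [erase_insert hp.2.2.1]
  · rintro ⟨Q, s⟩ hp
    simp only [mem_sigma, mem_filter] at hp
    simp [insert_erase hp.2.1]

theorem Nat.cast_choose_succ_mul_succ {K : Type*} [Ring K] (n r : ℕ) :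
    (n.choose (r + 1) : K) * (r + 1) = n.choose r * (n - r) := by
  rcases le_or_gt r n with hrn | hnr
  · simpa [Nat.cast_sub hrn] using congrArg (Nat.cast : ℕ → K) (Nat.choose_succ_right_eq n r)
  · simp [Nat.choose_eq_zero_of_lt hnr, Nat.choose_eq_zero_of_lt (hnr.trans r.lt_succ_self)]

theorem sampling_lemma_general {α : Type*} [Fintype α] [DecidableEq α]
    (φ : Finset α → ℝ) (n r : ℕ)
    (viol ext : Finset α → Finset α)
    (hviol : ∀ R : Finset α,
      viol R = univ.filter (fun s => s ∉ R ∧ φ (insert s R) ≠ φ R))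
    (hext : ∀ R : Finset α,
      ext R = R.filter (fun s => φ (R.erase s) ≠ φ R)) :
    ((∑ R ∈ univ.powersetCard r, ((viol R).card : ℝ)) / (n.choose r)) / ((n : ℝ) - r)
      = ((∑ R ∈ univ.powersetCard (r + 1), ((ext R).card : ℝ)) / (n.choose (r + 1)))
          / ((r : ℝ) + 1) := by
  have hsum : ∑ R ∈ univ.powersetCard r, ((viol R).card : ℝ)
      = ∑ Q ∈ univ.powersetCard (r + 1), ((ext Q).card : ℝ) := by
    simp only [hviol, hext]
    exact_mod_cast sum_card_violators_eq_sum_card_extreme univ φ r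
  rw [hsum, div_div, div_div, Nat.cast_choose_succ_mul_succ]

/-- **Sampling Lemma.** For a finite set `S` of size `n`, a function `φ : 2^S → ℝ`,
and `0 ≤ r < n`, with violators `V(R) = {s ∉ R : φ(R ∪ {s}) ≠ φ(R)}` and extreme
elements `X(R) = {s ∈ R : φ(R \ {s}) ≠ φ(R)}`, the expectations over a uniformly
random `r`-subset (resp. `(r+1)`-subset) satisfy `v_r/(n-r) = x_{r+1}/(r+1)`. -/
theorem sampling_lemma {α : Type*} [Fintype α] [DecidableEq α]
    (φ : Finset α → ℝ) (n r : ℕ) (hn : Fintype.card α = n) (hr : r < n)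
    (viol ext : Finset α → Finset α)
    (hviol : ∀ R : Finset α,
      viol R = univ.filter (fun s => s ∉ R ∧ φ (insert s R) ≠ φ R))
    (hext : ∀ R : Finset α,
      ext R = R.filter (fun s => φ (R.erase s) ≠ φ R)) :
    ((∑ R ∈ univ.powersetCard r, ((viol R).card : ℝ)) / (n.choose r)) / ((n : ℝ) - r)
      = ((∑ R ∈ univ.powersetCard (r + 1), ((ext R).card : ℝ)) / (n.choose (r + 1)))
          / ((r : ℝ) + 1) :=
  sampling_lemma_general φ n r viol ext hviol hext
end

section
/- Every violator space (H, V) satisfies monotonicity: for all F ⊆ E ⊆ G ⊆ H, if V(F) = V(G) then V(E) = V(F) = V(G). -/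
open Finset

/-- A violator space: a finite set `H` together with a violator mapping `V : 2^H → 2^H`
satisfying consistency and locality. -/
structure ViolatorSpace (H : Type*) [Fintype H] [DecidableEq H] where
  V : Finset H → Finset H
  consistency : ∀ G : Finset H, Disjoint G (V G)
  locality : ∀ F G : Finset H, F ⊆ G → Disjoint G (V F) → V G = V F

theorem ViolatorSpace.disjoint_V_of_subset {H : Type*} [Fintype H] [DecidableEq H]
    (VS : ViolatorSpace H) {E G : Finset H} (hEG : E ⊆ G) : Disjoint E (VS.V G) :=
  (VS.consistency G).mono_left hEG

/-- **Monotonicity.** Every violator space satisfies: for `F ⊆ E ⊆ G`,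
if `V(F) = V(G)` then `V(E) = V(F) = V(G)`. -/
theorem violatorSpace_monotonicity {H : Type*} [Fintype H] [DecidableEq H]
    (VS : ViolatorSpace H) (F E G : Finset H) (hFE : F ⊆ E) (hEG : E ⊆ G)
    (h : VS.V F = VS.V G) :
    VS.V E = VS.V F ∧ VS.V E = VS.V G := by
  have hE : VS.V E = VS.V F := VS.locality F E hFE (h ▸ VS.disjoint_V_of_subset hEG)
  exact ⟨hE, hE.trans h⟩
end

section
/- Let (H, V) be a violator space of combinatorial dimension d with |H| = n. If R ⊆ H is chosen uniformly at random among r-element subsets (r ≤ n), then the expected number of violators satisfies E[|V(R)|] ≤ d·(n-r)/(r+1). -/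
open Finset

/-- `B` is a basis of `G` for the mapping `W`: a minimal subset of `G` with the
same violators as `G`. -/
def IsBasisOf {H : Type*} [Fintype H] [DecidableEq H]
    (W : Finset H → Finset H) (B G : Finset H) : Prop :=
  B ⊆ G ∧ W B = W G ∧ ∀ B' : Finset H, B' ⊂ B → W B' ≠ W G

/-!
Sampling lemma: `s` violates an `r`-set `R` exactly when `s` is extreme in the `(r+1)`-set
`R ∪ {s}`, so the pairs `(R, s ∈ V R)` with `|R| = r` are in bijection with the pairs
`(Q, s ∈ X Q)` with `|Q| = r + 1`. Every extreme element of `Q` lies in every basis of `Q`,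
hence `|X Q| ≤ d`, and the total number of violators over all `r`-sets is at most
`d · C(n, r+1) = d · C(n, r) · (n - r)/(r + 1)`.
-/

theorem Nat.cast_choose_succ_right_eq (n r : ℕ) (hr : r ≤ n) :
    (n.choose (r + 1) : ℝ) = n.choose r * ((n : ℝ) - r) / ((r : ℝ) + 1) := by
  rw [eq_div_iff (by positivity), ← Nat.cast_sub hr]
  exact_mod_cast Nat.choose_succ_right_eq n r

section Basis

variable {H : Type*} [Fintype H] [DecidableEq H]

theorem exists_isBasisOf (W : Finset H → Finset H) (G : Finset H) :
    ∃ B, IsBasisOf W B G := by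
  have hne : (G.powerset.filter (fun B => W B = W G)).Nonempty := ⟨G, by simp⟩
  obtain ⟨B, hB, hmin⟩ := exists_min_image _ card hne
  rw [mem_filter, mem_powerset] at hB
  refine ⟨B, hB.1, hB.2, fun B' hB' hV => ?_⟩
  have hle : B.card ≤ B'.card := hmin B' (by simp [hV, hB'.subset.trans hB.1])
  exact (card_lt_card hB').not_ge hle

end Basis

namespace ViolatorSpace

variable {H : Type*} [Fintype H] [DecidableEq H] (VS : ViolatorSpace H)

/-- The extreme elements `X(Q)`. -/
def extreme (Q : Finset H) : Finset H :=
  Q.filter fun s => VS.V (Q.erase s) ≠ VS.V Q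

theorem mem_V_iff_V_insert_ne {s : H} {R : Finset H} :
    s ∈ VS.V R ↔ VS.V (insert s R) ≠ VS.V R := by
  constructor
  · intro h heq
    have hdisj := VS.consistency (insert s R)
    rw [heq] at hdisj
    exact disjoint_left.1 hdisj (mem_insert_self s R) h
  · intro h
    by_contra hsV
    exact h (VS.locality R (insert s R) (subset_insert s R)
      (disjoint_insert_left.2 ⟨hsV, VS.consistency R⟩))

theorem mem_extreme_iff {s : H} {Q : Finset H} :
    s ∈ VS.extreme Q ↔ s ∈ Q ∧ s ∈ VS.V (Q.erase s) := by
  rw [extreme, mem_filter, and_congr_right_iff]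
  intro hs
  rw [VS.mem_V_iff_V_insert_ne, insert_erase hs, ne_comm]

theorem extreme_subset_of_isBasisOf {B Q : Finset H} (hB : IsBasisOf VS.V B Q) :
    VS.extreme Q ⊆ B := by
  intro s hs
  rw [extreme, mem_filter] at hs
  by_contra hsB
  have hdisj : Disjoint (Q.erase s) (VS.V B) :=
    hB.2.1 ▸ (VS.consistency Q).mono_left (erase_subset s Q)
  exact hs.2 ((VS.locality B (Q.erase s) (subset_erase.2 ⟨hB.1, hsB⟩) hdisj).trans hB.2.1)

theorem card_extreme_le {d : ℕ} (hd : ∀ G B : Finset H, IsBasisOf VS.V B G → B.card ≤ d)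
    (Q : Finset H) : (VS.extreme Q).card ≤ d := by
  obtain ⟨B, hB⟩ := exists_isBasisOf VS.V Q
  exact (card_le_card (VS.extreme_subset_of_isBasisOf hB)).trans (hd Q B hB)

theorem sum_card_V_eq_sum_card_extreme (r : ℕ) :
    ∑ R ∈ univ.powersetCard r, (VS.V R).card
      = ∑ Q ∈ univ.powersetCard (r + 1), (VS.extreme Q).card := by
  rw [← card_sigma, ← card_sigma]
  refine card_bij' (fun p _ => ⟨insert p.2 p.1, p.2⟩) (fun p _ => ⟨p.1.erase p.2, p.2⟩)
    ?_ ?_ ?_ ?_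
  all_goals
    rintro ⟨R, s⟩ hp
    simp only [mem_sigma, mem_powersetCard_univ, mem_extreme_iff] at hp ⊢
  · have hsR : s ∉ R := disjoint_right.1 (VS.consistency R) hp.2
    rw [card_insert_of_notMem hsR, erase_insert hsR]
    exact ⟨by rw [hp.1], mem_insert_self s R, hp.2⟩
  · rw [card_erase_of_mem hp.2.1, hp.1]
    exact ⟨rfl, hp.2.2⟩
  · rw [erase_insert (disjoint_right.1 (VS.consistency R) hp.2)]
  · rw [insert_erase hp.2.1]

end ViolatorSpace

/-- Let `(H, V)` be a violator space of combinatorial dimension (at most) `d`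
with `|H| = n`. For a uniformly random `r`-element subset `R ⊆ H` (`r ≤ n`), the
expected number of violators satisfies `E[|V(R)|] ≤ d (n - r)/(r + 1)`. -/
theorem expected_violators_bound {H : Type*} [Fintype H] [DecidableEq H]
    (VS : ViolatorSpace H) (d n r : ℕ) (hn : Fintype.card H = n) (hr : r ≤ n)
    (hd : ∀ G B : Finset H, IsBasisOf VS.V B G → B.card ≤ d) :
    (∑ R ∈ univ.powersetCard r, ((VS.V R).card : ℝ)) / (n.choose r)
      ≤ (d : ℝ) * ((n : ℝ) - r) / ((r : ℝ) + 1) := by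
  have hcount : ∑ R ∈ univ.powersetCard r, (VS.V R).card ≤ d * n.choose (r + 1) :=
    calc ∑ R ∈ univ.powersetCard r, (VS.V R).card
        = ∑ Q ∈ univ.powersetCard (r + 1), (VS.extreme Q).card :=
          VS.sum_card_V_eq_sum_card_extreme r
      _ ≤ ∑ _Q ∈ univ.powersetCard (r + 1), d :=
          sum_le_sum fun Q _ => VS.card_extreme_le hd Q
      _ = d * n.choose (r + 1) := by
          rw [sum_const, card_powersetCard, card_univ, hn, smul_eq_mul, mul_comm]
  have hchoose : (0 : ℝ) < n.choose r := by exact_mod_cast Nat.choose_pos hr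
  rw [div_le_iff₀ hchoose]
  calc ∑ R ∈ univ.powersetCard r, ((VS.V R).card : ℝ)
      ≤ d * n.choose (r + 1) := by exact_mod_cast hcount
    _ = d * ((n : ℝ) - r) / ((r : ℝ) + 1) * n.choose r := by
        rw [Nat.cast_choose_succ_right_eq n r hr]
        ring
end

section
/- Let (H, V) be a violator space, F ⊆ G ⊆ H, and G ∩ V(F) ≠ ∅. Then G ∩ V(F) contains at least one element from every basis of G. -/
open Finset

/-! If a basis `B` of `G` missed `V(F)`, locality applied to `F ⊆ F ∪ B` and to
`B ⊆ F ∪ B ⊆ G` would give `V(F) = V(F ∪ B) = V(B) = V(G)`, whereas `G ∩ V(G) = ∅`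
by consistency. -/

namespace ViolatorSpace

variable {H : Type*} [Fintype H] [DecidableEq H] (VS : ViolatorSpace H) {A B C F G : Finset H}

theorem V_union_eq_of_disjoint (h : Disjoint B (VS.V F)) : VS.V (F ∪ B) = VS.V F :=
  VS.locality F (F ∪ B) subset_union_left (disjoint_union_left.mpr ⟨VS.consistency F, h⟩)

theorem V_eq_of_subset_of_subset (hAC : A ⊆ C) (hCG : C ⊆ G) (h : VS.V A = VS.V G) :
    VS.V C = VS.V G := by
  rw [← h]
  exact VS.locality A C hAC (h ▸ (VS.consistency G).mono_left hCG)

theorem V_eq_of_disjoint_of_V_eq (hFG : F ⊆ G) (hBG : B ⊆ G) (hB : VS.V B = VS.V G)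
    (hdisj : Disjoint B (VS.V F)) : VS.V F = VS.V G := by
  rw [← VS.V_union_eq_of_disjoint hdisj]
  exact VS.V_eq_of_subset_of_subset subset_union_right (union_subset hFG hBG) hB

end ViolatorSpace

/-- Let `(H, V)` be a violator space, `F ⊆ G ⊆ H`, and `G ∩ V(F) ≠ ∅`.
Then `G ∩ V(F)` contains at least one element from every basis of `G`. -/
theorem violators_meet_every_basis {H : Type*} [Fintype H] [DecidableEq H]
    (VS : ViolatorSpace H) (F G : Finset H) (hFG : F ⊆ G)
    (hne : (G ∩ VS.V F).Nonempty) :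
    ∀ B : Finset H, IsBasisOf VS.V B G → (B ∩ (G ∩ VS.V F)).Nonempty := by
  rintro B ⟨hBG, hVB, -⟩
  by_contra hempty
  have hdisj : Disjoint B (VS.V F) := disjoint_left.mpr fun a haB haV =>
    hempty ⟨a, mem_inter.mpr ⟨haB, mem_inter.mpr ⟨hBG haB, haV⟩⟩⟩
  obtain ⟨x, hx⟩ := hne
  rw [mem_inter, VS.V_eq_of_disjoint_of_V_eq hFG hBG hVB hdisj] at hx
  exact disjoint_left.mp (VS.consistency G) hx.1 hx.2
end

section
/- Consider the German Algorithm on a violator space (H, V): starting from G^(0) = R, in round i compute a basis B^(i) of G^(i-1), set V^(i) = V(G^(i-1)) = V(B^(i)), and G^(i) = G^(i-1) ∪ V^(i); the algorithm stops when V^(ℓ+1) = ∅. Then for all j < i ≤ ℓ (rounds with nonempty violator sets), B^(i) ∩ V^(j) ≠ ∅. -/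
open Finset

/-- The working sets of the German Algorithm started from `R`:
`G⁽⁰⁾ = R` and `G⁽ⁱ⁺¹⁾ = G⁽ⁱ⁾ ∪ V(G⁽ⁱ⁾)`.  (Round `i ≥ 1` of the algorithm
computes a basis of `G⁽ⁱ⁻¹⁾`, whose violator set is `V⁽ⁱ⁾ = V(G⁽ⁱ⁻¹⁾)`;
once the violator set is empty the sequence stabilizes, matching the
convention that sets of later rounds equal those of the final round.) -/
def Gseq {H : Type*} [Fintype H] [DecidableEq H]
    (VS : ViolatorSpace H) (R : Finset H) : ℕ → Finset H
  | 0 => R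
  | (i + 1) => Gseq VS R i ∪ VS.V (Gseq VS R i)

/-!
If `B⁽ⁱ⁾` missed `V⁽ʲ⁾ = V(G⁽ʲ⁻¹⁾)`, locality applied to `B⁽ⁱ⁾ ∪ G⁽ʲ⁻¹⁾ ⊆ G⁽ⁱ⁻¹⁾` would give
`V(G⁽ʲ⁻¹⁾) = V(G⁽ⁱ⁻¹⁾)`. But `V(G⁽ʲ⁻¹⁾)` is nonempty and contained in `G⁽ʲ⁾ ⊆ G⁽ⁱ⁻¹⁾`, which by
consistency is disjoint from its own violators.
-/

section German

variable {H : Type*} [Fintype H] [DecidableEq H] (VS : ViolatorSpace H)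

/-- Both `F` and `B` have the violators of `B ∪ F`. -/
theorem ViolatorSpace.V_eq_of_disjoint_of_V_eq_s8 {B F G : Finset H} (hBG : B ⊆ G)
    (hVB : VS.V B = VS.V G) (hFG : F ⊆ G) (hdisj : Disjoint B (VS.V F)) :
    VS.V F = VS.V G := by
  have hF : VS.V (B ∪ F) = VS.V F :=
    VS.locality F _ subset_union_right
      (disjoint_union_left.2 ⟨hdisj, VS.consistency F⟩)
  have hB : VS.V (B ∪ F) = VS.V B := by
    refine VS.locality B _ subset_union_left ?_
    rw [hVB]
    exact (VS.consistency G).mono_left (union_subset hBG hFG)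
  rw [← hF, hB, hVB]

variable (R : Finset H)

theorem Gseq_mono : Monotone (Gseq VS R) :=
  monotone_nat_of_le_succ fun _ => subset_union_left

theorem V_Gseq_subset_Gseq_succ (i : ℕ) : VS.V (Gseq VS R i) ⊆ Gseq VS R (i + 1) :=
  subset_union_right

theorem V_Gseq_ne_of_lt {a b : ℕ} (hne : (VS.V (Gseq VS R a)).Nonempty) (hab : a < b) :
    VS.V (Gseq VS R a) ≠ VS.V (Gseq VS R b) := by
  intro heq
  have hsub : VS.V (Gseq VS R a) ⊆ Gseq VS R b :=
    (V_Gseq_subset_Gseq_succ VS R a).trans (Gseq_mono VS R hab)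
  have hdisj : Disjoint (VS.V (Gseq VS R a)) (VS.V (Gseq VS R a)) := by
    nth_rewrite 2 [heq]
    exact (VS.consistency _).mono_left hsub
  exact hne.ne_empty (disjoint_self.1 hdisj)

end German

/-- **Lemma 3.** In the German Algorithm, if `B⁽ⁱ⁾` is a basis of `G⁽ⁱ⁻¹⁾` for
each round `i ≥ 1`, and rounds `1, …, ℓ` are controversial (`V⁽ⁱ⁾ ≠ ∅`), then
for all `j < i ≤ ℓ` we have `B⁽ⁱ⁾ ∩ V⁽ʲ⁾ ≠ ∅`. -/
theorem german_basis_meets_earlier_violators {H : Type*} [Fintype H] [DecidableEq H]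
    (VS : ViolatorSpace H) (R : Finset H) (Bs : ℕ → Finset H) (ℓ : ℕ)
    (hB : ∀ i : ℕ, 1 ≤ i → IsBasisOf VS.V (Bs i) (Gseq VS R (i - 1)))
    (hc : ∀ i : ℕ, 1 ≤ i → i ≤ ℓ → VS.V (Gseq VS R (i - 1)) ≠ ∅) :
    ∀ j i : ℕ, 1 ≤ j → j < i → i ≤ ℓ →
      (Bs i ∩ VS.V (Gseq VS R (j - 1))).Nonempty := by
  intro j i hj hji hiℓ
  obtain ⟨hBsub, hBV, -⟩ := hB i (by omega)
  rw [← not_disjoint_iff_nonempty_inter]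
  intro hdisj
  refine V_Gseq_ne_of_lt VS R (nonempty_iff_ne_empty.2 (hc j hj (by omega)))
    (show j - 1 < i - 1 by omega) ?_
  exact VS.V_eq_of_disjoint_of_V_eq_s8 hBsub hBV (Gseq_mono VS R (by omega)) hdisj
end

section
/- In the German Algorithm on a violator space of combinatorial dimension d, the number of rounds is at most d + 1. -/
open Finset

/-!
Fix a basis `B` of the whole ground set; it has no violators. By locality, a set `G` whose
violators avoid `B` has the same violators as `G ∪ B`, hence as `B`, i.e. none. So every round
that still finds violators adds a new element of `B` to the working set, and since `|B| ≤ d`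
this can happen at most `d` times.
-/

section

variable {H : Type*} [Fintype H] [DecidableEq H]

namespace ViolatorSpace

variable (VS : ViolatorSpace H)

theorem V_univ : VS.V univ = ∅ :=
  top_disjoint.mp (VS.consistency univ)

theorem V_eq_empty_of_disjoint {B G : Finset H} (hB : VS.V B = ∅)
    (hBG : Disjoint B (VS.V G)) : VS.V G = ∅ := by
  have hB_union : VS.V (G ∪ B) = VS.V B :=
    VS.locality B (G ∪ B) subset_union_right (by simp [hB])
  have hG_union : VS.V (G ∪ B) = VS.V G :=
    VS.locality G (G ∪ B) subset_union_left (disjoint_union_left.mpr ⟨VS.consistency G, hBG⟩)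
  rw [← hG_union, hB_union, hB]

end ViolatorSpace

theorem card_inter_Gseq_lt_succ (VS : ViolatorSpace H) (R B : Finset H) (i : ℕ)
    (hi : ¬Disjoint B (VS.V (Gseq VS R i))) :
    #(Gseq VS R i ∩ B) < #(Gseq VS R (i + 1) ∩ B) := by
  obtain ⟨x, hxB, hxV⟩ := not_disjoint_iff.mp hi
  have hx_new : x ∉ Gseq VS R i := disjoint_right.mp (VS.consistency _) hxV
  refine card_lt_card ((ssubset_iff_of_subset ?_).mpr ⟨x, ?_, ?_⟩)
  · exact inter_subset_inter_right subset_union_left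
  · exact mem_inter.mpr ⟨mem_union_right _ hxV, hxB⟩
  · exact fun hx => hx_new (mem_inter.mp hx).1

theorem le_card_inter_Gseq (VS : ViolatorSpace H) (R B : Finset H) (n : ℕ)
    (h : ∀ i < n, ¬Disjoint B (VS.V (Gseq VS R i))) :
    n ≤ #(Gseq VS R n ∩ B) := by
  induction n with
  | zero => exact Nat.zero_le _
  | succ n ih =>
    have hn := ih fun i hi => h i (by omega)
    have hstep := card_inter_Gseq_lt_succ VS R B n (h n n.lt_succ_self)
    omega

end

/-- In the German Algorithm on a violator space of combinatorial dimension `d`,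
the number of rounds is at most `d + 1`: for every starting sample `R`, some
round `ℓ + 1` with `ℓ ≤ d` finds no violators, i.e. `V(G⁽ˡ⁾) = ∅`. -/
theorem german_rounds_bound {H : Type*} [Fintype H] [DecidableEq H]
    (VS : ViolatorSpace H) (d : ℕ)
    (hd : ∀ G B : Finset H, IsBasisOf VS.V B G → B.card ≤ d)
    (R : Finset H) :
    ∃ ℓ ≤ d, VS.V (Gseq VS R ℓ) = ∅ := by
  obtain ⟨B, hB⟩ := exists_isBasisOf VS.V univ
  have hVB : VS.V B = ∅ := hB.2.1.trans VS.V_univ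
  by_contra! hrounds
  have hgrow := le_card_inter_Gseq VS R B (d + 1) fun i hi hdisj =>
    (hrounds i (by omega)).ne_empty (VS.V_eq_empty_of_disjoint hVB hdisj)
  have hsub : #(Gseq VS R (d + 1) ∩ B) ≤ #B := card_le_card inter_subset_right
  have hBd := hd _ _ hB
  omega
end

section
/- Let (H, V) be a violator space. For R ⊆ H define Γ(R) = (V_R^(1), ..., V_R^(d)), the sequence of violator sets in the first d rounds of the German Algorithm started from R, and V'(R) = {h ∈ H\R : Γ(R) ≠ Γ(R ∪ {h})}. Then (H, V') satisfies consistency and locality, i.e., it is a violator space. -/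
open Finset

/-- The derived violator mapping of the German Algorithm:
`V'(R) = {h ∈ H \ R : Γ(R) ≠ Γ(R ∪ {h})}`, where
`Γ(R) = (V_R⁽¹⁾, …, V_R⁽ᵈ⁾)` is the tuple of violator sets of the first `d`
rounds of the German Algorithm started from `R` (here `V_R⁽ⁱ⁺¹⁾ = V(G_R⁽ⁱ⁾)`). -/
def Vprime {H : Type*} [Fintype H] [DecidableEq H]
    (VS : ViolatorSpace H) (d : ℕ) (R : Finset H) : Finset H :=
  univ.filter (fun h => h ∉ R ∧
    ∃ i ∈ Finset.range d,
      VS.V (Gseq VS R i) ≠ VS.V (Gseq VS (insert h R) i))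

/-!
`V'(R)` is the union of the violator sets `V(G_R⁽ⁱ⁾)`, `i < d`: an `h ∉ R` that is never violated
can be added to `R` without changing any working set's violators (locality of `V`), while at
the first round violating `h` the run from `R ∪ {h}` has `h` in its working set and so differs.
Consistency of `V'` is then immediate, and if `Q ⊇ R` avoids all these violator sets, locality
of `V` gives `G_Q⁽ⁱ⁾ = Q ∪ G_R⁽ⁱ⁾` with the same violators, round by round.
-/

namespace ViolatorSpace

variable {H : Type*} [Fintype H] [DecidableEq H] (VS : ViolatorSpace H)

theorem V_union_eq_of_disjoint_s10 {A F : Finset H} (hA : Disjoint A (VS.V F)) :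
    VS.V (A ∪ F) = VS.V F :=
  VS.locality F (A ∪ F) subset_union_right
    (disjoint_union_left.mpr ⟨hA, VS.consistency F⟩)

theorem subset_Gseq (R : Finset H) (i : ℕ) : R ⊆ Gseq VS R i := by
  induction i with
  | zero => exact subset_rfl
  | succ i ih => exact ih.trans subset_union_left

theorem disjoint_V_Gseq (R : Finset H) (i : ℕ) : Disjoint R (VS.V (Gseq VS R i)) :=
  (VS.consistency _).mono_left (VS.subset_Gseq R i)

theorem Gseq_union_of_disjoint {A R : Finset H} {i : ℕ}
    (hA : ∀ j < i, Disjoint A (VS.V (Gseq VS R j))) :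
    Gseq VS (A ∪ R) i = A ∪ Gseq VS R i := by
  induction i with
  | zero => rfl
  | succ i ih =>
    have hGi := ih fun j hj => hA j (Nat.lt_succ_of_lt hj)
    calc Gseq VS (A ∪ R) (i + 1)
        = (A ∪ Gseq VS R i) ∪ VS.V (A ∪ Gseq VS R i) := by rw [Gseq, hGi]
      _ = A ∪ Gseq VS R (i + 1) := by
        rw [VS.V_union_eq_of_disjoint_s10 (hA i i.lt_succ_self), union_assoc, Gseq]

theorem V_Gseq_union_of_disjoint {A R : Finset H} {i : ℕ}
    (hA : ∀ j ≤ i, Disjoint A (VS.V (Gseq VS R j))) :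
    VS.V (Gseq VS (A ∪ R) i) = VS.V (Gseq VS R i) := by
  rw [VS.Gseq_union_of_disjoint fun j hj => hA j hj.le,
    VS.V_union_eq_of_disjoint_s10 (hA i le_rfl)]

theorem V_Gseq_ne_V_Gseq_insert {R : Finset H} {h : H} {i : ℕ}
    (hfirst : ∀ j < i, h ∉ VS.V (Gseq VS R j)) (hi : h ∈ VS.V (Gseq VS R i)) :
    VS.V (Gseq VS R i) ≠ VS.V (Gseq VS (insert h R) i) := by
  have hG : Gseq VS (insert h R) i = insert h (Gseq VS R i) := by
    rw [insert_eq, insert_eq]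
    exact VS.Gseq_union_of_disjoint fun j hj => disjoint_singleton_left.mpr (hfirst j hj)
  intro hV
  have hmem : h ∈ Gseq VS (insert h R) i := hG ▸ mem_insert_self h _
  exact disjoint_left.mp (VS.consistency _) hmem (hV ▸ hi)

theorem Vprime_eq_biUnion (d : ℕ) (R : Finset H) :
    Vprime VS d R = (range d).biUnion fun i => VS.V (Gseq VS R i) := by
  ext h
  simp only [Vprime, mem_filter, mem_univ, true_and, mem_biUnion, mem_range]
  constructor
  · rintro ⟨-, i, hid, hne⟩
    by_contra! hnever
    refine hne (VS.V_Gseq_union_of_disjoint (A := {h}) fun j hj => ?_).symm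
    exact disjoint_singleton_left.mpr (hnever j (hj.trans_lt hid))
  · rintro ⟨i, hid, hi⟩
    have hex : ∃ j, h ∈ VS.V (Gseq VS R j) := ⟨i, hi⟩
    refine ⟨disjoint_right.mp (VS.disjoint_V_Gseq R i) hi, Nat.find hex,
      (Nat.find_min' hex hi).trans_lt hid, ?_⟩
    exact VS.V_Gseq_ne_V_Gseq_insert (fun j => Nat.find_min hex) (Nat.find_spec hex)

end ViolatorSpace

theorem Vprime_is_violator_space_general {H : Type*} [Fintype H] [DecidableEq H]
    (VS : ViolatorSpace H) (d : ℕ) :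
    (∀ R : Finset H, Disjoint R (Vprime VS d R)) ∧
    (∀ R Q : Finset H, R ⊆ Q → Disjoint Q (Vprime VS d R) →
      Vprime VS d Q = Vprime VS d R) := by
  refine ⟨fun R => ?_, fun R Q hRQ hQ => ?_⟩
  · rw [VS.Vprime_eq_biUnion, disjoint_biUnion_right]
    exact fun i _ => VS.disjoint_V_Gseq R i
  · rw [VS.Vprime_eq_biUnion, disjoint_biUnion_right] at hQ
    rw [VS.Vprime_eq_biUnion, VS.Vprime_eq_biUnion]
    refine biUnion_congr rfl fun i hi => ?_
    rw [← union_eq_left.mpr hRQ]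
    exact VS.V_Gseq_union_of_disjoint fun j hj =>
      hQ j (mem_range.mpr (hj.trans_lt (mem_range.mp hi)))

/-- **Lemma 4 (i), first part.** If `(H, V)` has combinatorial dimension `d`, the
derived pair `(H, V')` satisfies consistency and locality, i.e. it is a violator
space. -/
theorem Vprime_is_violator_space {H : Type*} [Fintype H] [DecidableEq H]
    (VS : ViolatorSpace H) (d : ℕ)
    (hd : ∀ G B : Finset H, IsBasisOf VS.V B G → B.card ≤ d) :
    (∀ R : Finset H, Disjoint R (Vprime VS d R)) ∧
    (∀ R Q : Finset H, R ⊆ Q → Disjoint Q (Vprime VS d R) →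
      Vprime VS d Q = Vprime VS d R) :=
  Vprime_is_violator_space_general VS d
end

section
/- The derived violator space (H, V') from the German Algorithm has combinatorial dimension at most binomial(d+1, 2), where d is the combinatorial dimension of (H, V). -/
open Finset

/-!
Let `B` be a `V'`-basis of `R`, choose a basis `Bᵢ` of each working set `G⁽ⁱ⁾` of the run
from `B` (`i < d`), and put `T = B ∩ ⋃ᵢ Bᵢ`. Each `Bᵢ` lies in `T` together with the violator
sets of earlier rounds, so by locality every set between `T` and `B`, and also `T ∪ {h}` when
adding `h` does not change the run from `B`, has the same violator sets as `B` in the first `d`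
rounds. Hence `V'(T) = V'(B)`, and minimality of `B` gives `T = B`.

As long as no earlier round has an empty violator set, `Bᵢ` meets each of the `i` pairwise
disjoint violator sets of the earlier rounds (otherwise it would not pin down `V(G⁽ⁱ⁾)`), and
these avoid `B`; so `|B ∩ Bᵢ| ≤ d - i`. Once a violator set is empty the working sets stay
constant and contribute nothing new, whence `|B| ≤ d + (d - 1) + ⋯ + 1 = (d + 1).choose 2`.
-/

theorem sum_range_sub_eq_choose_two (d : ℕ) : ∑ i ∈ range d, (d - i) = (d + 1).choose 2 := by
  induction d with
  | zero => rfl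
  | succ d ih =>
    rw [sum_range_succ', Nat.choose_succ_succ', Nat.choose_one_right, ← ih]
    simp only [Nat.add_sub_add_right, Nat.sub_zero]
    ring

theorem IsBasisOf.eq_of_subset {H : Type*} [Fintype H] [DecidableEq H]
    {W : Finset H → Finset H} {B G T : Finset H} (hB : IsBasisOf W B G) (hTB : T ⊆ B)
    (hWT : W T = W B) : T = B :=
  by_contra fun hne => hB.2.2 T (ssubset_of_subset_of_ne hTB hne) (hWT.trans hB.2.1)

namespace ViolatorSpace

variable {H : Type*} [Fintype H] [DecidableEq H] (VS : ViolatorSpace H)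

theorem violators_eq_of_subset_of_subset {F E G : Finset H} (hFE : F ⊆ E) (hEG : E ⊆ G)
    (h : VS.V F = VS.V G) : VS.V E = VS.V G := by
  rw [← h]
  exact VS.locality F E hFE (h ▸ (VS.consistency G).mono_left hEG)

theorem exists_isBasisOf (G : Finset H) : ∃ B, IsBasisOf VS.V B G := by
  obtain ⟨B, ⟨hBmem, hBmin⟩⟩ :=
    (G.powerset.filter fun B => VS.V B = VS.V G).exists_minimal ⟨G, by simp⟩
  simp only [mem_filter, mem_powerset] at hBmem
  refine ⟨B, hBmem.1, hBmem.2, fun B' hB' hV => hB'.2 (hBmin ?_ hB'.1)⟩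
  simp only [mem_filter, mem_powerset]
  exact ⟨hB'.1.trans hBmem.1, hV⟩

theorem gseq_monotone (S : Finset H) : Monotone (Gseq VS S) :=
  monotone_nat_of_le_succ fun _ => subset_union_left

theorem subset_gseq (S : Finset H) (i : ℕ) : S ⊆ Gseq VS S i :=
  VS.gseq_monotone S (Nat.zero_le i)

theorem violators_gseq_subset_gseq (S : Finset H) {j i : ℕ} (hji : j < i) :
    VS.V (Gseq VS S j) ⊆ Gseq VS S i :=
  subset_union_right.trans (VS.gseq_monotone S hji)

theorem disjoint_violators_gseq (S : Finset H) {j i : ℕ} (hji : j < i) :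
    Disjoint (VS.V (Gseq VS S j)) (VS.V (Gseq VS S i)) :=
  (VS.consistency _).mono_left (VS.violators_gseq_subset_gseq S hji)

theorem notMem_violators_gseq {S : Finset H} {x : H} (hx : x ∈ S) (i : ℕ) :
    x ∉ VS.V (Gseq VS S i) :=
  disjoint_left.mp (VS.consistency _) (VS.subset_gseq S i hx)

theorem gseq_eq_union_of_violators_eq {A C : Finset H} {i : ℕ}
    (h : ∀ j < i, VS.V (Gseq VS A j) = VS.V (Gseq VS C j)) :
    Gseq VS A i = A ∪ (range i).biUnion fun j => VS.V (Gseq VS C j) := by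
  induction i with
  | zero => simp [Gseq]
  | succ i ih =>
    rw [Gseq, h i i.lt_succ_self, ih fun j hj => h j (hj.trans i.lt_succ_self),
      range_add_one, biUnion_insert]
    ac_rfl

theorem gseq_eq_union (S : Finset H) (i : ℕ) :
    Gseq VS S i = S ∪ (range i).biUnion fun j => VS.V (Gseq VS S j) :=
  VS.gseq_eq_union_of_violators_eq fun _ _ => rfl

theorem gseq_eq_of_violators_eq_empty (S : Finset H) {k : ℕ} (hk : VS.V (Gseq VS S k) = ∅)
    {i : ℕ} (hki : k ≤ i) : Gseq VS S i = Gseq VS S k := by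
  induction i, hki using Nat.le_induction with
  | base => rfl
  | succ i _ ih => rw [Gseq, ih, hk, union_empty]

theorem exists_le_gseq_eq (S : Finset H) (i : ℕ) :
    ∃ k ≤ i, (∀ j < k, VS.V (Gseq VS S j) ≠ ∅) ∧ Gseq VS S i = Gseq VS S k := by
  induction i using Nat.strong_induction_on with
  | _ i ih =>
    by_cases hemp : ∃ j < i, VS.V (Gseq VS S j) = ∅
    swap
    · exact ⟨i, le_rfl, fun j hji hj => hemp ⟨j, hji, hj⟩, rfl⟩
    obtain ⟨j, hji, hj⟩ := hemp
    obtain ⟨k, hkj, hk, hjk⟩ := ih j hji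
    exact ⟨k, hkj.trans hji.le, hk,
      VS.gseq_eq_of_violators_eq_empty S (hjk ▸ hj) (hkj.trans hji.le)⟩

theorem violators_gseq_eq_of_subset {A C : Finset H} (W : ℕ → Finset H) (hAC : A ⊆ C) {n : ℕ}
    (hWA : ∀ j < n, W j ⊆ A ∪ (range j).biUnion fun k => VS.V (Gseq VS C k))
    (hWV : ∀ j < n, VS.V (W j) = VS.V (Gseq VS C j)) :
    ∀ j < n, VS.V (Gseq VS A j) = VS.V (Gseq VS C j) := by
  intro j
  induction j using Nat.strong_induction_on with
  | _ j ih =>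
    intro hj
    have hGA := VS.gseq_eq_union_of_violators_eq fun k hk => ih k hk (hk.trans hj)
    have hAC' : Gseq VS A j ⊆ Gseq VS C j := by
      rw [hGA, VS.gseq_eq_union C j]
      exact union_subset_union_left hAC
    exact VS.violators_eq_of_subset_of_subset (hGA ▸ hWA j hj) hAC' (hWV j hj)

theorem violators_gseq_insert_eq {S : Finset H} {x : H} {n : ℕ}
    (hx : ∀ j < n, x ∉ VS.V (Gseq VS S j)) :
    ∀ j < n, VS.V (Gseq VS (insert x S) j) = VS.V (Gseq VS S j) := by
  intro j
  induction j using Nat.strong_induction_on with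
  | _ j ih =>
    intro hj
    have hG : Gseq VS (insert x S) j = insert x (Gseq VS S j) := by
      rw [VS.gseq_eq_union_of_violators_eq fun k hk => ih k hk (hk.trans hj),
        VS.gseq_eq_union S j, insert_union]
    rw [hG]
    exact VS.locality _ _ (subset_insert _ _)
      (disjoint_insert_left.mpr ⟨hx j hj, VS.consistency _⟩)

theorem vprime_eq_of_subset {S T : Finset H} (d : ℕ) (W : ℕ → Finset H) (hTS : T ⊆ S)
    (hWS : ∀ j < d, W j ⊆ Gseq VS S j) (hWV : ∀ j < d, VS.V (W j) = VS.V (Gseq VS S j))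
    (hWT : ∀ j < d, S ∩ W j ⊆ T) : Vprime VS d T = Vprime VS d S := by
  have hWT' : ∀ j < d, W j ⊆ T ∪ (range j).biUnion fun k => VS.V (Gseq VS S k) := by
    intro j hj x hx
    have hxG := hWS j hj hx
    rw [VS.gseq_eq_union S j, mem_union] at hxG
    exact mem_union.mpr (hxG.imp_left fun hxS => hWT j hj (mem_inter.mpr ⟨hxS, hx⟩))
  have hmid : ∀ U, T ⊆ U → U ⊆ S → ∀ j < d, VS.V (Gseq VS U j) = VS.V (Gseq VS S j) :=
    fun U hTU hUS => VS.violators_gseq_eq_of_subset W hUS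
      (fun j hj => (hWT' j hj).trans (union_subset_union_left hTU)) hWV
  have hins : ∀ x, (∀ j < d, VS.V (Gseq VS S j) = VS.V (Gseq VS (insert x S) j)) →
      ∀ j < d, VS.V (Gseq VS (insert x T) j) = VS.V (Gseq VS (insert x S) j) := by
    intro x hxS
    refine VS.violators_gseq_eq_of_subset W (insert_subset_insert x hTS) (fun j hj => ?_)
      (fun j hj => (hWV j hj).trans (hxS j hj))
    rw [← biUnion_congr rfl fun k hk => hxS k ((mem_range.mp hk).trans hj)]
    exact (hWT' j hj).trans (union_subset_union_left (subset_insert x T))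
  ext x
  simp only [Vprime, mem_filter, mem_univ, true_and, mem_range]
  constructor
  · rintro ⟨hxT, i, hi, hdiff⟩
    have hxS : x ∉ S := fun hxS => hdiff <| by
      rw [hmid T subset_rfl hTS i hi, hmid _ (subset_insert x T) (insert_subset hxS hTS) i hi]
    refine ⟨hxS, ?_⟩
    by_contra! hsame
    exact hdiff (by rw [hmid T subset_rfl hTS i hi, hins x hsame i hi, hsame i hi])
  · rintro ⟨hxS, i, hi, hdiff⟩
    refine ⟨fun hxT => hxS (hTS hxT), ?_⟩
    by_contra! hsame
    have hx : ∀ j < d, x ∉ VS.V (Gseq VS S j) := fun j hj => by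
      rw [← hmid T subset_rfl hTS j hj, hsame j hj]
      exact VS.notMem_violators_gseq (mem_insert_self x T) j
    exact hdiff (VS.violators_gseq_insert_eq hx i hi).symm

theorem not_disjoint_violators {F G B : Finset H} (hFG : F ⊆ G) (hVF : VS.V F ⊆ G)
    (hBG : B ⊆ G) (hVB : VS.V B = VS.V G) (hne : VS.V F ≠ ∅) : ¬Disjoint B (VS.V F) := by
  intro hdisj
  have hFB : VS.V (F ∪ B) = VS.V F :=
    VS.locality _ _ subset_union_left (disjoint_union_left.mpr ⟨VS.consistency F, hdisj⟩)
  have hFBG : VS.V (F ∪ B) = VS.V G :=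
    VS.violators_eq_of_subset_of_subset subset_union_right (union_subset hFG hBG) hVB
  have hVFG : Disjoint (VS.V F) (VS.V G) := (VS.consistency G).mono_left hVF
  rw [← hFB.symm.trans hFBG] at hVFG
  exact hne (disjoint_self.mp hVFG)

theorem card_inter_add_le_card (S : Finset H) {i : ℕ} {B : Finset H}
    (hBG : B ⊆ Gseq VS S i) (hVB : VS.V B = VS.V (Gseq VS S i))
    (hne : ∀ j < i, VS.V (Gseq VS S j) ≠ ∅) : (S ∩ B).card + i ≤ B.card := by
  have hmeet : ∀ j ∈ range i, ∃ x, x ∈ B \ S ∧ x ∈ VS.V (Gseq VS S j) := by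
    intro j hj
    have hji := mem_range.mp hj
    obtain ⟨x, hxB, hxV⟩ := not_disjoint_iff.mp <| VS.not_disjoint_violators
      (VS.gseq_monotone S hji.le) (VS.violators_gseq_subset_gseq S hji) hBG hVB (hne j hji)
    exact ⟨x, mem_sdiff.mpr ⟨hxB, fun hxS => VS.notMem_violators_gseq hxS j hxV⟩, hxV⟩
  have hunique : ∀ x ∈ B \ S,
      ({j ∈ (range i : Set ℕ) | x ∈ VS.V (Gseq VS S j)} : Set ℕ).Subsingleton := by
    intro x _ j hj k hk
    by_contra hjk
    rcases lt_or_gt_of_ne hjk with hlt | hlt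
    · exact disjoint_left.mp (VS.disjoint_violators_gseq S hlt) hj.2 hk.2
    · exact disjoint_left.mp (VS.disjoint_violators_gseq S hlt) hk.2 hj.2
  have hi : (range i).card ≤ (B \ S).card :=
    card_le_card_of_forall_subsingleton (fun j x => x ∈ VS.V (Gseq VS S j)) hmeet hunique
  rw [card_range] at hi
  rw [inter_comm]
  have := card_inter_add_card_sdiff B S
  omega

theorem card_inter_biUnion_le_choose_two (S : Finset H) {d : ℕ} (B : Finset H → Finset H)
    (hBG : ∀ G, B G ⊆ G) (hVB : ∀ G, VS.V (B G) = VS.V G) (hBd : ∀ G, (B G).card ≤ d) :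
    (S ∩ (range d).biUnion fun i => B (Gseq VS S i)).card ≤ (d + 1).choose 2 := by
  set I := (range d).filter fun i => ∀ j < i, VS.V (Gseq VS S j) ≠ ∅
  have hsub : (S ∩ (range d).biUnion fun i => B (Gseq VS S i)) ⊆
      I.biUnion fun i => S ∩ B (Gseq VS S i) := by
    intro x hx
    obtain ⟨hxS, hx⟩ := mem_inter.mp hx
    obtain ⟨i, hi, hxi⟩ := mem_biUnion.mp hx
    obtain ⟨k, hki, hk, hik⟩ := VS.exists_le_gseq_eq S i
    refine mem_biUnion.mpr ⟨k, mem_filter.mpr ⟨?_, hk⟩, mem_inter.mpr ⟨hxS, hik ▸ hxi⟩⟩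
    exact mem_range.mpr (hki.trans_lt (mem_range.mp hi))
  have hterm : ∀ i ∈ I, (S ∩ B (Gseq VS S i)).card ≤ d - i := fun i hi =>
    Nat.le_sub_of_add_le <| (VS.card_inter_add_le_card S (hBG _) (hVB _)
      (mem_filter.mp hi).2).trans (hBd _)
  calc _ ≤ (I.biUnion fun i => S ∩ B (Gseq VS S i)).card := card_le_card hsub
    _ ≤ ∑ i ∈ I, (S ∩ B (Gseq VS S i)).card := card_biUnion_le
    _ ≤ ∑ i ∈ I, (d - i) := sum_le_sum hterm
    _ ≤ ∑ i ∈ range d, (d - i) := sum_le_sum_of_subset (filter_subset _ _)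
    _ = (d + 1).choose 2 := sum_range_sub_eq_choose_two d

end ViolatorSpace

/-- **Lemma 4 (i), second part.** The derived violator space `(H, V')` has
combinatorial dimension at most `(d + 1 choose 2)`, where `d` is the
combinatorial dimension of `(H, V)`. -/
theorem Vprime_dim_bound {H : Type*} [Fintype H] [DecidableEq H]
    (VS : ViolatorSpace H) (d : ℕ)
    (hd : ∀ G B : Finset H, IsBasisOf VS.V B G → B.card ≤ d) :
    ∀ R B : Finset H, IsBasisOf (Vprime VS d) B R → B.card ≤ (d + 1).choose 2 := by
  intro R B hB
  choose b hb using VS.exists_isBasisOf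
  have hVT : Vprime VS d (B ∩ (range d).biUnion fun i => b (Gseq VS B i)) = Vprime VS d B :=
    VS.vprime_eq_of_subset d (fun i => b (Gseq VS B i)) inter_subset_left
      (fun _ _ => (hb _).1) (fun _ _ => (hb _).2.1)
      fun _ hj => inter_subset_inter subset_rfl
        (subset_biUnion_of_mem (fun i => b (Gseq VS B i)) (mem_range.mpr hj))
  rw [← hB.eq_of_subset inter_subset_left hVT]
  exact VS.card_inter_biUnion_le_choose_two B b (fun G => (hb G).1) (fun G => (hb G).2.1)
    fun G => hd G _ (hb G)
end

section
/- Auxiliary claim for the German Algorithm: let Q = R ⊔ T ⊆ H (disjoint union) and i < d. If V_Q^(j+1) = V_R^(j+1) for all j ≤ i, then G_Q^(j) = G_R^(j) ⊔ T for all j ≤ i+1. -/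
open Finset

namespace ViolatorSpace

variable {H : Type*} [Fintype H] [DecidableEq H] (VS : ViolatorSpace H)

theorem disjoint_V_of_V_union_eq {G T : Finset H} (hV : VS.V (G ∪ T) = VS.V G) :
    Disjoint T (VS.V G) := by
  have h := VS.consistency (G ∪ T)
  rw [hV] at h
  exact (disjoint_union_left.mp h).2

theorem union_V_union_of_V_union_eq {G T : Finset H} (hGT : Disjoint G T)
    (hV : VS.V (G ∪ T) = VS.V G) :
    (G ∪ T) ∪ VS.V (G ∪ T) = (G ∪ VS.V G) ∪ T ∧ Disjoint (G ∪ VS.V G) T := by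
  refine ⟨by rw [hV]; ac_rfl, disjoint_union_left.mpr ⟨hGT, ?_⟩⟩
  exact (VS.disjoint_V_of_V_union_eq hV).symm

end ViolatorSpace

theorem german_claim_disjoint_union_general {H : Type*} [Fintype H] [DecidableEq H]
    (VS : ViolatorSpace H) (R T Q : Finset H)
    (hdisj : Disjoint R T) (hQ : Q = R ∪ T) (i : ℕ)
    (hV : ∀ j ≤ i, VS.V (Gseq VS Q j) = VS.V (Gseq VS R j)) :
    ∀ j ≤ i + 1, Gseq VS Q j = Gseq VS R j ∪ T ∧ Disjoint (Gseq VS R j) T := by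
  intro j
  induction j with
  | zero => exact fun _ => ⟨hQ, hdisj⟩
  | succ k ih =>
    intro hk
    obtain ⟨hG, hD⟩ := ih (by omega)
    have hVk : VS.V (Gseq VS R k ∪ T) = VS.V (Gseq VS R k) := hG ▸ hV k (by omega)
    simpa only [Gseq, hG] using VS.union_V_union_of_V_union_eq hD hVk

/-- **Claim 1.** Let `Q = R ⊔ T ⊆ H` (disjoint union) and `i < d`. If
`V_Q⁽ʲ⁺¹⁾ = V_R⁽ʲ⁺¹⁾` for all `j ≤ i` (where `V_S⁽ʲ⁺¹⁾ = V(G_S⁽ʲ⁾)`), then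
`G_Q⁽ʲ⁾ = G_R⁽ʲ⁾ ⊔ T` for all `j ≤ i + 1`. -/
theorem german_claim_disjoint_union {H : Type*} [Fintype H] [DecidableEq H]
    (VS : ViolatorSpace H) (d : ℕ) (R T Q : Finset H)
    (hdisj : Disjoint R T) (hQ : Q = R ∪ T) (i : ℕ) (hi : i < d)
    (hV : ∀ j ≤ i, VS.V (Gseq VS Q j) = VS.V (Gseq VS R j)) :
    ∀ j ≤ i + 1, Gseq VS Q j = Gseq VS R j ∪ T ∧ Disjoint (Gseq VS R j) T :=
  german_claim_disjoint_union_general VS R T Q hdisj hQ i hV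
end

section
/- In any violator space (H, V), every G ⊆ H has a unique anti-basis: there is a unique maximal superset B̄ ⊇ G with V(B̄) = V(G), and for all proper supersets F ⊃ B̄ one has V(B̄) ∩ F ≠ ∅. -/
/-!
The anti-basis of `G` is the complement of `V(G)`. Consistency gives `F ⊆ V(F)ᶜ` for every `F`,
so any set with the same violators as `G` lies inside `V(G)ᶜ`; conversely locality, applied to
`G ⊆ V(G)ᶜ`, shows that `V(G)ᶜ` has the same violators as `G`. Anything strictly larger than
`V(G)ᶜ` meets `V(G)`.
-/

open Finset

namespace ViolatorSpace

variable {H : Type*} [Fintype H] [DecidableEq H] (VS : ViolatorSpace H)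

def antiBasis (G : Finset H) : Finset H := (VS.V G)ᶜ

theorem subset_antiBasis_of_V_eq {F G : Finset H} (h : VS.V F = VS.V G) :
    F ⊆ VS.antiBasis G := by
  rw [antiBasis, ← h]
  exact subset_compl_iff_disjoint_right.mpr (VS.consistency F)

theorem subset_antiBasis (G : Finset H) : G ⊆ VS.antiBasis G :=
  VS.subset_antiBasis_of_V_eq rfl

theorem V_antiBasis (G : Finset H) : VS.V (VS.antiBasis G) = VS.V G :=
  VS.locality G _ (VS.subset_antiBasis G) disjoint_compl_left

theorem V_antiBasis_inter_nonempty {G F : Finset H} (h : VS.antiBasis G ⊂ F) :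
    (VS.V (VS.antiBasis G) ∩ F).Nonempty := by
  obtain ⟨x, hxF, hx⟩ := exists_of_ssubset h
  rw [V_antiBasis]
  exact ⟨x, mem_inter.mpr ⟨by simpa [antiBasis] using hx, hxF⟩⟩

end ViolatorSpace

/-- In any violator space `(H, V)`, every `G ⊆ H` has a unique anti-basis: a
unique maximal superset `B̄ ⊇ G` with `V(B̄) = V(G)`; moreover every proper
superset `F ⊃ B̄` satisfies `V(B̄) ∩ F ≠ ∅`. -/
theorem unique_anti_basis {H : Type*} [Fintype H] [DecidableEq H]
    (VS : ViolatorSpace H) (G : Finset H) :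
    ∃! Bbar : Finset H,
      (G ⊆ Bbar ∧ VS.V Bbar = VS.V G ∧
        ∀ F : Finset H, Bbar ⊆ F → VS.V F = VS.V G → F = Bbar) ∧
      (∀ F : Finset H, Bbar ⊂ F → (VS.V Bbar ∩ F).Nonempty) := by
  refine ⟨VS.antiBasis G, ⟨⟨VS.subset_antiBasis G, VS.V_antiBasis G, ?_⟩, ?_⟩, ?_⟩
  · exact fun F hBF hVF => (VS.subset_antiBasis_of_V_eq hVF).antisymm hBF
  · exact fun F => VS.V_antiBasis_inter_nonempty
  · rintro B ⟨⟨-, hVB, hmax⟩, -⟩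
    exact (hmax _ (VS.subset_antiBasis_of_V_eq hVB) (VS.V_antiBasis G)).symm
end
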